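/- arXiv:2303.15635 — 2 statements merged into one kernel-verified Lean document; each statement's English description precedes it below -/
import Mathlib

section
/- Let 2 ≤ k_1 ≤ ... ≤ k_t with k_t ≥ 3 and κ = Σ(k_i - 1). Then both K_{κ, κ+t+1}^p := κK_1 ∨ ((κ+t-2)K_1 ∪ P_3) and K_{κ, κ+t+1}^m := κK_1 ∨ ((κ+t-3)K_1 ∪ 2K_2) contain the intersecting even cycle C_{2k_1,...,2k_t} as a subgraph. -/
/-- The intersecting even cycle `C_{2k₁,…,2k_t}`. -/
def interCycles (t : ℕ) (k : Fin t → ℕ) :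
    SimpleGraph (Option (Σ i : Fin t, Fin (2 * k i - 1))) :=
  SimpleGraph.fromRel (fun x y =>
    match x, y with
    | none, some ⟨i, j⟩ => (j : ℕ) = 0 ∨ (j : ℕ) = 2 * k i - 2
    | some ⟨i, j⟩, some ⟨i', j'⟩ => i = i' ∧ (j : ℕ) + 1 = (j' : ℕ)
    | _, _ => False)

/-- `K_{a,b}^p = aK₁ ∨ ((b-3)K₁ ∪ P₃)`: `K_{a,b}` with a path on the three
vertices `0, 1, 2` added inside the part of size `b`. -/
def Kbp (a b : ℕ) : SimpleGraph (Fin a ⊕ Fin b) :=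
  SimpleGraph.fromRel (fun x y =>
    match x, y with
    | Sum.inl _, Sum.inr _ => True
    | Sum.inr i, Sum.inr j =>
        ((i : ℕ) = 0 ∧ (j : ℕ) = 1) ∨ ((i : ℕ) = 1 ∧ (j : ℕ) = 2)
    | _, _ => False)

/-- `K_{a,b}^m = aK₁ ∨ ((b-4)K₁ ∪ 2K₂)`: `K_{a,b}` with the two disjoint
edges `01` and `23` added inside the part of size `b`. -/
def Kbm (a b : ℕ) : SimpleGraph (Fin a ⊕ Fin b) :=
  SimpleGraph.fromRel (fun x y =>
    match x, y with
    | Sum.inl _, Sum.inr _ => True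
    | Sum.inr i, Sum.inr j =>
        ((i : ℕ) = 0 ∧ (j : ℕ) = 1) ∨ ((i : ℕ) = 2 ∧ (j : ℕ) = 3)
    | _, _ => False)

namespace Stmt12Aux

variable (t : ℕ) (k : Fin t → ℕ)

def m (i : ℕ) : ℕ := if h : i < t then k ⟨i, h⟩ else 2

def S (n : ℕ) : ℕ := ∑ j ∈ Finset.range n, (m t k j - 1)

def T (n : ℕ) : ℕ := m t k (t - 1) + 1 + ∑ j ∈ Finset.range n, m t k j

lemma m_val (i : Fin t) : m t k i.val = k i := by simp [m, i.isLt]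

variable (hk : ∀ i, 2 ≤ k i)

include hk in
lemma m_ge (i : ℕ) : 2 ≤ m t k i := by
  unfold m; split
  · exact hk _
  · exact le_refl 2

lemma S_succ (n : ℕ) : S t k (n + 1) = S t k n + (m t k n - 1) :=
  Finset.sum_range_succ _ _

lemma S_mono {a b : ℕ} (h : a ≤ b) : S t k a ≤ S t k b :=
  Finset.sum_le_sum_of_subset (Finset.range_subset_range.2 h)

omit hk in
lemma S_step {a b : ℕ} (h : a < b) : S t k a + (m t k a - 1) ≤ S t k b := by
  rw [← S_succ]; exact S_mono t k h

lemma T_succ (n : ℕ) : T t k (n + 1) = T t k n + m t k n := by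
  simp [T, Finset.sum_range_succ]; ring

lemma T_mono {a b : ℕ} (h : a ≤ b) : T t k a ≤ T t k b := by
  unfold T
  have := Finset.sum_le_sum_of_subset (f := m t k) (Finset.range_subset_range.2 h)
  omega

lemma T_step {a b : ℕ} (h : a < b) : T t k a + m t k a ≤ T t k b := by
  rw [← T_succ]; exact T_mono t k h

lemma T_ge (n : ℕ) : m t k (t - 1) + 1 ≤ T t k n := by unfold T; omega

include hk in
lemma Msum (n : ℕ) : ∑ j ∈ Finset.range n, m t k j = S t k n + n := by
  induction n with
  | zero => simp [S]
  | succ n ih =>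
    have h2 := m_ge t k hk n
    rw [Finset.sum_range_succ, ih, S_succ]
    omega

include hk in
lemma T_top (ht : 1 ≤ t) : T t k (t - 1) = S t k t + t + 1 := by
  have hst := S_succ t k (t - 1)
  rw [show t - 1 + 1 = t from by omega] at hst
  have h2 := m_ge t k hk (t - 1)
  rw [T, Msum t k hk]
  omega

include hk in
lemma St_eq (ht : 1 ≤ t) : S t k t = S t k (t - 1) + (m t k (t - 1) - 1) := by
  have hst := S_succ t k (t - 1)
  rwa [show t - 1 + 1 = t from by omega] at hst

include hk in
lemma S_ge (n : ℕ) : n ≤ S t k n := by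
  induction n with
  | zero => simp [S]
  | succ n ih =>
    have h2 := m_ge t k hk n
    rw [S_succ]
    omega

/-- the embedding into `ℕ ⊕ ℕ`, parameterized by the layout `lf` of the last
cycle (offsets relative to `S (t-1)` on the left). -/
def gg (lf : ℕ → ℕ ⊕ ℕ) : Option (Σ i : Fin t, Fin (2 * k i - 1)) → ℕ ⊕ ℕ
  | none => Sum.inl (S t k t - 1)
  | some ⟨i, j⟩ =>
    if i.val = t - 1 then
      Sum.map (fun v => S t k (t - 1) + v) id (lf j.val)
    else
      if j.val % 2 = 0 then Sum.inr (T t k i.val + j.val / 2)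
      else Sum.inl (S t k i.val + j.val / 2)

section

variable (lf : ℕ → ℕ ⊕ ℕ) (ht : 1 ≤ t) (h3 : 3 ≤ m t k (t - 1))
variable (HinjL : ∀ x y, x < 2 * m t k (t - 1) - 1 → y < 2 * m t k (t - 1) - 1 →
    lf x = lf y → x = y)
variable (HA : ∀ x v, x < 2 * m t k (t - 1) - 1 → lf x = Sum.inl v →
    v ≤ m t k (t - 1) - 3)
variable (HB : ∀ x v, x < 2 * m t k (t - 1) - 1 → lf x = Sum.inr v →
    v ≤ m t k (t - 1))

include hk ht h3 HA HB HinjL in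
lemma gg_inj : Function.Injective (gg t k lf) := by
  have hSt := St_eq t k hk ht
  -- no `some` vertex maps to the value of `none`
  have key : ∀ (i : Fin t) (j : Fin (2 * k i - 1)),
      gg t k lf (some ⟨i, j⟩) = Sum.inl (S t k t - 1) → False := by
    intro i j hab
    have hj : (j : ℕ) < 2 * m t k i.val - 1 := by rw [m_val]; exact j.isLt
    simp only [gg] at hab
    by_cases hi : i.val = t - 1
    · rw [if_pos hi] at hab
      rw [hi] at hj
      cases hlf : lf j.val with
      | inl v =>
        have hv := HA _ _ hj hlf
        rw [hlf] at hab
        simp only [Sum.map_inl, Sum.inl.injEq] at hab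
        omega
      | inr v =>
        rw [hlf] at hab
        simp at hab
    · rw [if_neg hi] at hab
      have hi2 : i.val < t - 1 := by have := i.isLt; omega
      have h1 := S_step t k (b := t - 1) hi2
      have hm := m_ge t k hk i.val
      split_ifs at hab with hpar <;>
        simp only [Sum.inl.injEq, reduceCtorEq] at hab <;> omega
  intro a b hab
  match a, b with
  | none, none => rfl
  | none, some ⟨i, j⟩ => exact absurd hab.symm (fun h => key i j h)
  | some ⟨i, j⟩, none => exact absurd hab (fun h => key i j h)
  | some ⟨i, j⟩, some ⟨i', j'⟩ =>
    have hj : (j : ℕ) < 2 * m t k i.val - 1 := by rw [m_val]; exact j.isLt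
    have hj' : (j' : ℕ) < 2 * m t k i'.val - 1 := by rw [m_val]; exact j'.isLt
    have hm := m_ge t k hk i.val
    have hm' := m_ge t k hk i'.val
    simp only [gg] at hab
    -- a local fact:  last-cycle value = non-last-cycle value is impossible
    have mixed : ∀ (u : Fin t) (x : ℕ) (u' : Fin t) (x' : ℕ),
        x < 2 * m t k (t - 1) - 1 → x' < 2 * m t k u'.val - 1 →
        u.val = t - 1 → u'.val ≠ t - 1 →
        Sum.map (fun v => S t k (t - 1) + v) id (lf x) =
          (if x' % 2 = 0 then Sum.inr (T t k u'.val + x' / 2)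
           else Sum.inl (S t k u'.val + x' / 2)) → False := by
      intro u x u' x' hx hx' hu hu' heq
      have hu2 : u'.val < t - 1 := by have := u'.isLt; omega
      have hmu' := m_ge t k hk u'.val
      cases hlf : lf x with
      | inl v =>
        have hv := HA _ _ hx hlf
        rw [hlf] at heq
        have h1 := S_step t k (b := t - 1) hu2
        split_ifs at heq with hpar <;>
          simp only [Sum.map_inl, Sum.inl.injEq, reduceCtorEq] at heq <;> omega
      | inr v =>
        have hv := HB _ _ hx hlf
        rw [hlf] at heq
        have h1 := T_ge t k u'.val
        split_ifs at heq with hpar <;>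
          simp only [Sum.map_inr, id_eq, Sum.inr.injEq, reduceCtorEq] at heq <;> omega
    by_cases hi : i.val = t - 1 <;> by_cases hi' : i'.val = t - 1
    · -- both in last cycle
      rw [if_pos hi, if_pos hi'] at hab
      have hii : i = i' := Fin.ext (by omega)
      subst hii
      rw [hi] at hj hj'
      have hjj : j.val = j'.val := by
        apply HinjL _ _ hj hj'
        cases hlf : lf j.val with
        | inl v =>
          cases hlf' : lf j'.val with
          | inl v' =>
            rw [hlf, hlf'] at hab
            simp only [Sum.map_inl, Sum.inl.injEq] at hab
            congr 1
            omega
          | inr v' => rw [hlf, hlf'] at hab; simp at hab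
        | inr v =>
          cases hlf' : lf j'.val with
          | inl v' => rw [hlf, hlf'] at hab; simp at hab
          | inr v' =>
            rw [hlf, hlf'] at hab
            simp only [Sum.map_inr, id_eq, Sum.inr.injEq] at hab
            rw [hab]
      have : j = j' := Fin.ext hjj
      rw [this]
    · rw [if_pos hi, if_neg hi'] at hab
      rw [hi] at hj
      exact absurd hab (fun h => mixed i j.val i' j'.val hj hj' hi hi' h)
    · rw [if_neg hi, if_pos hi'] at hab
      rw [hi'] at hj'
      exact absurd hab.symm (fun h => mixed i' j'.val i j.val hj' hj hi' hi h)
    · -- both non-last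
      rw [if_neg hi, if_neg hi'] at hab
      have hi2 : i.val < t - 1 := by have := i.isLt; omega
      have hi2' : i'.val < t - 1 := by have := i'.isLt; omega
      -- two distinct non-last cycles give distinct values
      have sep : ∀ (u u' : ℕ) (x x' : ℕ), u < u' →
          x < 2 * m t k u - 1 → x' < 2 * m t k u' - 1 →
          (if x % 2 = 0 then Sum.inr (T t k u + x / 2)
           else Sum.inl (S t k u + x / 2)) =
          (if x' % 2 = 0 then Sum.inr (T t k u' + x' / 2)
           else Sum.inl (S t k u' + x' / 2)) → u' < t → False := by
        intro u u' x x' huu hx hx' heq hu't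
        have hT := T_step t k (a := u) (b := u') huu
        have hS := S_step t k (a := u) (b := u') huu
        have hmu := m_ge t k hk u
        split_ifs at heq <;> simp only [Sum.inr.injEq, Sum.inl.injEq] at heq <;> omega
      rcases Nat.lt_trichotomy i.val i'.val with hlt | heqv | hgt
      · exact absurd hab (fun h => sep i.val i'.val j.val j'.val hlt hj hj' h i'.isLt)
      · have hii : i = i' := Fin.ext heqv
        subst hii
        have hjj : j.val = j'.val := by
          split_ifs at hab <;> simp only [Sum.inr.injEq, Sum.inl.injEq] at hab <;> omega
        have : j = j' := Fin.ext hjj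
        rw [this]
      · exact absurd hab.symm (fun h => sep i'.val i.val j'.val j.val hgt hj' hj h i.isLt)

include hk ht h3 HA in
lemma gg_boundA : ∀ v a, gg t k lf v = Sum.inl a → a < S t k t := by
  intro v a hv
  have hSt := St_eq t k hk ht
  match v with
  | none => simp only [gg, Sum.inl.injEq] at hv; omega
  | some ⟨i, j⟩ =>
    have hj : (j : ℕ) < 2 * m t k i.val - 1 := by rw [m_val]; exact j.isLt
    have hm := m_ge t k hk i.val
    simp only [gg] at hv
    by_cases hi : i.val = t - 1
    · rw [if_pos hi] at hv
      rw [hi] at hj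
      cases hlf : lf j.val with
      | inl w =>
        have := HA _ _ hj hlf
        rw [hlf] at hv
        simp only [Sum.map_inl, Sum.inl.injEq] at hv
        omega
      | inr w => rw [hlf] at hv; simp at hv
    · rw [if_neg hi] at hv
      have hstep := S_step t k (b := t) (a := i.val) i.isLt
      split_ifs at hv with hpar <;>
        simp only [Sum.inl.injEq, reduceCtorEq] at hv <;> omega

include hk ht h3 HB in
lemma gg_boundB : ∀ v b, gg t k lf v = Sum.inr b → b < S t k t + t + 1 := by
  intro v b hv
  have hTt := T_top t k hk ht
  match v with
  | none => simp [gg] at hv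
  | some ⟨i, j⟩ =>
    have hj : (j : ℕ) < 2 * m t k i.val - 1 := by rw [m_val]; exact j.isLt
    have hm := m_ge t k hk i.val
    simp only [gg] at hv
    by_cases hi : i.val = t - 1
    · rw [if_pos hi] at hv
      rw [hi] at hj
      cases hlf : lf j.val with
      | inl w => rw [hlf] at hv; simp at hv
      | inr w =>
        have := HB _ _ hj hlf
        rw [hlf] at hv
        simp only [Sum.map_inr, id_eq, Sum.inr.injEq] at hv
        have := T_ge t k (t - 1)
        omega
    · rw [if_neg hi] at hv
      have hi2 : i.val < t - 1 := by have := i.isLt; omega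
      have hTs := T_step t k (a := i.val) (b := t - 1) hi2
      split_ifs at hv with hpar <;>
        simp only [Sum.inr.injEq, reduceCtorEq] at hv <;> omega

end

def pad (n : ℕ) (h : 0 < n) (a : ℕ) : Fin n := ⟨if a < n then a else 0, by split <;> omega⟩

lemma pad_val {n : ℕ} (h : 0 < n) {a : ℕ} (ha : a < n) : (pad n h a : ℕ) = a := by
  simp [pad, ha]

def corr {V : Type*} (A B : ℕ) (hA : 0 < A) (hB : 0 < B) (g : V → ℕ ⊕ ℕ) (v : V) :
    Fin A ⊕ Fin B :=
  match g v with
  | Sum.inl a => Sum.inl (pad A hA a)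
  | Sum.inr b => Sum.inr (pad B hB b)

lemma corr_eq_inl {V : Type*} {A B : ℕ} {hA : 0 < A} {hB : 0 < B} {g : V → ℕ ⊕ ℕ}
    {v : V} {a : ℕ} (h : g v = Sum.inl a) :
    corr A B hA hB g v = Sum.inl (pad A hA a) := by unfold corr; rw [h]

lemma corr_eq_inr {V : Type*} {A B : ℕ} {hA : 0 < A} {hB : 0 < B} {g : V → ℕ ⊕ ℕ}
    {v : V} {b : ℕ} (h : g v = Sum.inr b) :
    corr A B hA hB g v = Sum.inr (pad B hB b) := by unfold corr; rw [h]

lemma corr_inj {V : Type*} (A B : ℕ) (hA : 0 < A) (hB : 0 < B) (g : V → ℕ ⊕ ℕ)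
    (hg : Function.Injective g)
    (bA : ∀ v a, g v = Sum.inl a → a < A) (bB : ∀ v b, g v = Sum.inr b → b < B) :
    Function.Injective (corr A B hA hB g) := by
  intro u v h
  apply hg
  cases hu : g u with
  | inl a =>
    cases hv : g v with
    | inl a' =>
      rw [corr_eq_inl hu, corr_eq_inl hv] at h
      simp only [Sum.inl.injEq] at h
      have h2 : (pad A hA a : ℕ) = (pad A hA a' : ℕ) := by rw [h]
      rw [pad_val hA (bA u a hu), pad_val hA (bA v a' hv)] at h2
      rw [h2]
    | inr b' => rw [corr_eq_inl hu, corr_eq_inr hv] at h; simp at h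
  | inr b =>
    cases hv : g v with
    | inl a' => rw [corr_eq_inr hu, corr_eq_inl hv] at h; simp at h
    | inr b' =>
      rw [corr_eq_inr hu, corr_eq_inr hv] at h
      simp only [Sum.inr.injEq] at h
      have h2 : (pad B hB b : ℕ) = (pad B hB b' : ℕ) := by rw [h]
      rw [pad_val hB (bB u b hu), pad_val hB (bB v b' hv)] at h2
      rw [h2]

end Stmt12Aux

section GraphHelpers

lemma kbp_lr {a b : ℕ} (x : Fin a) (y : Fin b) :
    (Kbp a b).Adj (Sum.inl x) (Sum.inr y) := by
  rw [Kbp, SimpleGraph.fromRel_adj]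
  exact ⟨by simp, Or.inl trivial⟩

lemma kbp_rr {a b : ℕ} {x y : Fin b}
    (h : ((x : ℕ) = 0 ∧ (y : ℕ) = 1) ∨ ((x : ℕ) = 1 ∧ (y : ℕ) = 2)) :
    (Kbp a b).Adj (Sum.inr x) (Sum.inr y) := by
  rw [Kbp, SimpleGraph.fromRel_adj]
  refine ⟨?_, Or.inl h⟩
  intro hxy
  simp only [Sum.inr.injEq] at hxy
  subst hxy
  rcases h with ⟨h1, h2⟩ | ⟨h1, h2⟩ <;> omega

lemma kbm_lr {a b : ℕ} (x : Fin a) (y : Fin b) :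
    (Kbm a b).Adj (Sum.inl x) (Sum.inr y) := by
  rw [Kbm, SimpleGraph.fromRel_adj]
  exact ⟨by simp, Or.inl trivial⟩

lemma kbm_rr {a b : ℕ} {x y : Fin b}
    (h : ((x : ℕ) = 0 ∧ (y : ℕ) = 1) ∨ ((x : ℕ) = 2 ∧ (y : ℕ) = 3)) :
    (Kbm a b).Adj (Sum.inr x) (Sum.inr y) := by
  rw [Kbm, SimpleGraph.fromRel_adj]
  refine ⟨?_, Or.inl h⟩
  intro hxy
  simp only [Sum.inr.injEq] at hxy
  subst hxy
  rcases h with ⟨h1, h2⟩ | ⟨h1, h2⟩ <;> omega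

end GraphHelpers
namespace Stmt12Aux

section AdjPres

variable (t : ℕ) (k : Fin t → ℕ) (hk : ∀ i, 2 ≤ k i) (lf : ℕ → ℕ ⊕ ℕ)
  (ht : 1 ≤ t) (h3 : 3 ≤ m t k (t - 1))

include hk ht h3 in
lemma gg_adj {A B : ℕ} (hA : 0 < A) (hB : 0 < B)
    (H : SimpleGraph (Fin A ⊕ Fin B))
    (hlr : ∀ (x : Fin A) (y : Fin B), H.Adj (Sum.inl x) (Sum.inr y))
    (H0 : ∃ v, lf 0 = Sum.inr v)
    (Hend : ∃ v, lf (2 * m t k (t - 1) - 2) = Sum.inr v)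
    (Hnoll : ∀ x v w, x + 1 < 2 * m t k (t - 1) - 1 → lf x = Sum.inl v →
      lf (x + 1) = Sum.inl w → False)
    (hbb : ∀ x v w, x + 1 < 2 * m t k (t - 1) - 1 → lf x = Sum.inr v →
      lf (x + 1) = Sum.inr w →
      H.Adj (Sum.inr (pad B hB v)) (Sum.inr (pad B hB w))) :
    ∀ a b, (interCycles t k).Adj a b →
      H.Adj (corr A B hA hB (gg t k lf) a) (corr A B hA hB (gg t k lf) b) := by
  have hgnone : gg t k lf none = Sum.inl (S t k t - 1) := rfl
  have hnone : ∀ (i : Fin t) (j : Fin (2 * k i - 1)),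
      (j : ℕ) = 0 ∨ (j : ℕ) = 2 * k i - 2 →
      ∃ w, gg t k lf (some ⟨i, j⟩) = Sum.inr w := by
    intro i j hj0
    have hki : k i = m t k i.val := (m_val t k i).symm
    have hm := m_ge t k hk i.val
    by_cases hi : i.val = t - 1
    · rw [hi] at hki
      rcases hj0 with h0 | h0
      · obtain ⟨w, hw⟩ := H0
        exact ⟨w, by simp only [gg]; rw [if_pos hi, h0, hw]; rfl⟩
      · obtain ⟨w, hw⟩ := Hend
        refine ⟨w, ?_⟩
        simp only [gg]
        rw [if_pos hi, show (j : ℕ) = 2 * m t k (t - 1) - 2 from by omega, hw]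
        rfl
    · refine ⟨T t k i.val + (j : ℕ) / 2, ?_⟩
      simp only [gg]
      rw [if_neg hi, if_pos (by omega)]
  have hstep : ∀ (i : Fin t) (j j' : Fin (2 * k i - 1)), (j : ℕ) + 1 = (j' : ℕ) →
      H.Adj (corr A B hA hB (gg t k lf) (some ⟨i, j⟩))
        (corr A B hA hB (gg t k lf) (some ⟨i, j'⟩)) := by
    intro i j j' hjj
    have hj' : (j' : ℕ) < 2 * m t k i.val - 1 := by rw [m_val]; exact j'.isLt
    by_cases hi : i.val = t - 1
    · have hx : (j : ℕ) + 1 < 2 * m t k (t - 1) - 1 := by rw [← hi]; omega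
      have e1 : ∀ w, lf (j : ℕ) = w → gg t k lf (some ⟨i, j⟩) =
          Sum.map (fun v => S t k (t - 1) + v) id w := by
        intro w hw; simp only [gg]; rw [if_pos hi, hw]
      have e2 : ∀ w, lf ((j : ℕ) + 1) = w → gg t k lf (some ⟨i, j'⟩) =
          Sum.map (fun v => S t k (t - 1) + v) id w := by
        intro w hw
        simp only [gg]
        rw [if_pos hi, show (j' : ℕ) = (j : ℕ) + 1 from hjj.symm, hw]
      cases hl1 : lf (j : ℕ) with
      | inl v =>
        cases hl2 : lf ((j : ℕ) + 1) with
        | inl w => exact absurd hl2 (fun h => Hnoll _ _ _ hx hl1 h)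
        | inr w =>
          have E1 : gg t k lf (some ⟨i, j⟩) = Sum.inl (S t k (t - 1) + v) := by
            have := e1 _ hl1; rwa [Sum.map_inl] at this
          have E2 : gg t k lf (some ⟨i, j'⟩) = Sum.inr w := by
            have := e2 _ hl2; rwa [Sum.map_inr, id_eq] at this
          rw [corr_eq_inl E1, corr_eq_inr E2]
          exact hlr _ _
      | inr v =>
        cases hl2 : lf ((j : ℕ) + 1) with
        | inl w =>
          have E1 : gg t k lf (some ⟨i, j⟩) = Sum.inr v := by
            have := e1 _ hl1; rwa [Sum.map_inr, id_eq] at this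
          have E2 : gg t k lf (some ⟨i, j'⟩) = Sum.inl (S t k (t - 1) + w) := by
            have := e2 _ hl2; rwa [Sum.map_inl] at this
          rw [corr_eq_inr E1, corr_eq_inl E2]
          exact (hlr _ _).symm
        | inr w =>
          have E1 : gg t k lf (some ⟨i, j⟩) = Sum.inr v := by
            have := e1 _ hl1; rwa [Sum.map_inr, id_eq] at this
          have E2 : gg t k lf (some ⟨i, j'⟩) = Sum.inr w := by
            have := e2 _ hl2; rwa [Sum.map_inr, id_eq] at this
          rw [corr_eq_inr E1, corr_eq_inr E2]
          exact hbb _ _ _ hx hl1 hl2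
    · by_cases hpar : (j : ℕ) % 2 = 0
      · have E1 : gg t k lf (some ⟨i, j⟩) = Sum.inr (T t k i.val + (j : ℕ) / 2) := by
          simp only [gg]; rw [if_neg hi, if_pos hpar]
        have E2 : gg t k lf (some ⟨i, j'⟩) = Sum.inl (S t k i.val + (j' : ℕ) / 2) := by
          simp only [gg]; rw [if_neg hi, if_neg (by omega)]
        rw [corr_eq_inr E1, corr_eq_inl E2]
        exact (hlr _ _).symm
      · have E1 : gg t k lf (some ⟨i, j⟩) = Sum.inl (S t k i.val + (j : ℕ) / 2) := by
          simp only [gg]; rw [if_neg hi, if_neg hpar]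
        have E2 : gg t k lf (some ⟨i, j'⟩) = Sum.inr (T t k i.val + (j' : ℕ) / 2) := by
          simp only [gg]; rw [if_neg hi, if_pos (by omega)]
        rw [corr_eq_inl E1, corr_eq_inr E2]
        exact hlr _ _
  intro a b hadj
  rw [interCycles, SimpleGraph.fromRel_adj] at hadj
  obtain ⟨hne, hrel⟩ := hadj
  match a, b with
  | none, none => exact absurd rfl hne
  | none, some ⟨i, j⟩ =>
    have h' : (j : ℕ) = 0 ∨ (j : ℕ) = 2 * k i - 2 := by
      rcases hrel with h | h
      · exact h
      · exact h.elim
    obtain ⟨w, hw⟩ := hnone i j h'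
    rw [corr_eq_inl hgnone, corr_eq_inr hw]
    exact hlr _ _
  | some ⟨i, j⟩, none =>
    have h' : (j : ℕ) = 0 ∨ (j : ℕ) = 2 * k i - 2 := by
      rcases hrel with h | h
      · exact h.elim
      · exact h
    obtain ⟨w, hw⟩ := hnone i j h'
    rw [corr_eq_inl hgnone, corr_eq_inr hw]
    exact (hlr _ _).symm
  | some ⟨i, j⟩, some ⟨i', j'⟩ =>
    rcases hrel with h | h
    · have h' : i = i' ∧ (j : ℕ) + 1 = (j' : ℕ) := h
      obtain ⟨hii, hjj⟩ := h'
      subst hii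
      exact hstep i j j' hjj
    · have h' : i' = i ∧ (j' : ℕ) + 1 = (j : ℕ) := h
      obtain ⟨hii, hjj⟩ := h'
      subst hii
      exact (hstep _ j' j hjj).symm

end AdjPres

/-- last-cycle layout for `K^p`: `B B B A B A B … A B`. -/
def lp (x : ℕ) : ℕ ⊕ ℕ :=
  if x ≤ 2 then Sum.inr x
  else if x % 2 = 0 then Sum.inr (x / 2 + 1)
  else Sum.inl ((x - 3) / 2)

/-- last-cycle layout for `K^m`: `B B A B B A B … A B`. -/
def lm (x : ℕ) : ℕ ⊕ ℕ :=
  if x ≤ 1 then Sum.inr x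
  else if x = 3 then Sum.inr 2
  else if x % 2 = 0 ∧ 4 ≤ x then Sum.inr (x / 2 + 1)
  else Sum.inl ((x - 3) / 2)

section LF

variable (M : ℕ)

lemma lp_inj : ∀ x y, x < 2 * M - 1 → y < 2 * M - 1 → lp x = lp y → x = y := by
  intro x y hx hy h
  unfold lp at h
  split_ifs at h <;>
    simp only [Sum.inl.injEq, Sum.inr.injEq, reduceCtorEq] at h <;> omega

lemma lp_A : ∀ x v, x < 2 * M - 1 → lp x = Sum.inl v → v ≤ M - 3 := by
  intro x v hx h
  unfold lp at h
  split_ifs at h <;> simp only [Sum.inl.injEq, reduceCtorEq] at h <;> omega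

lemma lp_B : ∀ x v, x < 2 * M - 1 → lp x = Sum.inr v → v ≤ M := by
  intro x v hx h
  unfold lp at h
  split_ifs at h <;> simp only [Sum.inr.injEq, reduceCtorEq] at h <;> omega

lemma lp_0 : ∃ v, lp 0 = Sum.inr v := ⟨0, rfl⟩

lemma lp_end (hM : 3 ≤ M) : ∃ v, lp (2 * M - 2) = Sum.inr v :=
  ⟨(2 * M - 2) / 2 + 1, by unfold lp; rw [if_neg (by omega), if_pos (by omega)]⟩

lemma lp_noll : ∀ x v w, x + 1 < 2 * M - 1 → lp x = Sum.inl v →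
    lp (x + 1) = Sum.inl w → False := by
  intro x v w hx h1 h2
  unfold lp at h1 h2
  split_ifs at h1 h2 <;>
    simp only [Sum.inl.injEq, reduceCtorEq] at h1 h2 <;> omega

lemma lp_bb {A B : ℕ} (hB : 0 < B) (hB3 : 3 ≤ B) :
    ∀ x v w, x + 1 < 2 * M - 1 → lp x = Sum.inr v → lp (x + 1) = Sum.inr w →
      (Kbp A B).Adj (Sum.inr (pad B hB v)) (Sum.inr (pad B hB w)) := by
  intro x v w hx h1 h2
  unfold lp at h1 h2
  split_ifs at h1 h2 <;>
    simp only [Sum.inr.injEq, reduceCtorEq] at h1 h2 <;>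
    try (exfalso; omega)
  apply kbp_rr
  rw [pad_val hB (by omega), pad_val hB (by omega)]
  omega

lemma lm_inj : ∀ x y, x < 2 * M - 1 → y < 2 * M - 1 → lm x = lm y → x = y := by
  intro x y hx hy h
  unfold lm at h
  split_ifs at h <;>
    simp only [Sum.inl.injEq, Sum.inr.injEq, reduceCtorEq] at h <;> omega

lemma lm_A (hM : 3 ≤ M) : ∀ x v, x < 2 * M - 1 → lm x = Sum.inl v → v ≤ M - 3 := by
  intro x v hx h
  unfold lm at h
  split_ifs at h <;> simp only [Sum.inl.injEq, reduceCtorEq] at h <;> omega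

lemma lm_B : ∀ x v, x < 2 * M - 1 → lm x = Sum.inr v → v ≤ M := by
  intro x v hx h
  unfold lm at h
  split_ifs at h <;> simp only [Sum.inr.injEq, reduceCtorEq] at h <;> omega

lemma lm_0 : ∃ v, lm 0 = Sum.inr v := ⟨0, rfl⟩

lemma lm_end (hM : 3 ≤ M) : ∃ v, lm (2 * M - 2) = Sum.inr v :=
  ⟨(2 * M - 2) / 2 + 1, by
    unfold lm
    rw [if_neg (by omega), if_neg (by omega), if_pos (⟨by omega, by omega⟩)]⟩

lemma lm_noll : ∀ x v w, x + 1 < 2 * M - 1 → lm x = Sum.inl v →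
    lm (x + 1) = Sum.inl w → False := by
  intro x v w hx h1 h2
  unfold lm at h1 h2
  split_ifs at h1 h2 <;>
    simp only [Sum.inl.injEq, reduceCtorEq] at h1 h2 <;> omega

lemma lm_bb {A B : ℕ} (hB : 0 < B) (hB3 : 4 ≤ B) :
    ∀ x v w, x + 1 < 2 * M - 1 → lm x = Sum.inr v → lm (x + 1) = Sum.inr w →
      (Kbm A B).Adj (Sum.inr (pad B hB v)) (Sum.inr (pad B hB w)) := by
  intro x v w hx h1 h2
  unfold lm at h1 h2
  split_ifs at h1 h2 <;>
    simp only [Sum.inr.injEq, reduceCtorEq] at h1 h2 <;>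
    try (exfalso; omega)
  all_goals
    apply kbm_rr
    rw [pad_val hB (by omega), pad_val hB (by omega)]
    omega

end LF

end Stmt12Aux


/-- for `2 ≤ k₁ ≤ … ≤ k_t` with `k_t ≥ 3` and `κ = ∑ (k i - 1)`,
both `K_{κ,κ+t+1}^p` and `K_{κ,κ+t+1}^m` contain `C_{2k₁,…,2k_t}` as a
subgraph. -/
theorem stmt12 (t : ℕ) (ht : 1 ≤ t) (k : Fin t → ℕ)
    (hmono : Monotone k) (hk : ∀ i, 2 ≤ k i)
    (hlast : 3 ≤ k ⟨t - 1, by omega⟩)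
    (κ : ℕ) (hκ : κ = ∑ i, (k i - 1)) :
    (∃ f : Option (Σ i : Fin t, Fin (2 * k i - 1)) ↪ (Fin κ ⊕ Fin (κ + t + 1)),
      ∀ a b, (interCycles t k).Adj a b → (Kbp κ (κ + t + 1)).Adj (f a) (f b)) ∧
    (∃ f : Option (Σ i : Fin t, Fin (2 * k i - 1)) ↪ (Fin κ ⊕ Fin (κ + t + 1)),
      ∀ a b, (interCycles t k).Adj a b → (Kbm κ (κ + t + 1)).Adj (f a) (f b)) := by
  open Stmt12Aux in
  have hκS : S t k t = κ := by
    rw [hκ, S, ← Fin.sum_univ_eq_sum_range (fun j => Stmt12Aux.m t k j - 1) t]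
    exact Finset.sum_congr rfl (fun i _ => by rw [m_val])
  open Stmt12Aux in
  have h3 : 3 ≤ Stmt12Aux.m t k (t - 1) := by
    have h := m_val t k ⟨t - 1, by omega⟩
    rw [h]
    exact hlast
  open Stmt12Aux in
  have hA : 0 < κ := by have := S_ge t k hk t; omega
  open Stmt12Aux in
  have hA2 : 2 ≤ κ := by
    have h1 := S_step t k (a := t - 1) (b := t) (by omega)
    omega
  have hB : 0 < κ + t + 1 := by omega
  open Stmt12Aux in
  constructor
  · refine ⟨⟨corr κ (κ + t + 1) hA hB (gg t k lp), ?_⟩, ?_⟩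
    · refine corr_inj _ _ _ _ _
        (gg_inj t k hk lp ht h3 (lp_inj _) (lp_A _) (lp_B _)) ?_ ?_
      · intro v a h
        have := gg_boundA t k hk lp ht h3 (lp_A _) v a h
        omega
      · intro v b h
        have := gg_boundB t k hk lp ht h3 (lp_B _) v b h
        omega
    · intro a b hab
      exact gg_adj t k hk lp ht h3 hA hB (Kbp κ (κ + t + 1)) (fun x y => kbp_lr x y)
        lp_0 (lp_end _ h3) (lp_noll _) (lp_bb _ hB (by omega)) a b hab
  · refine ⟨⟨corr κ (κ + t + 1) hA hB (gg t k lm), ?_⟩, ?_⟩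
    · refine corr_inj _ _ _ _ _
        (gg_inj t k hk lm ht h3 (lm_inj _) (lm_A _ h3) (lm_B _)) ?_ ?_
      · intro v a h
        have := gg_boundA t k hk lm ht h3 (lm_A _ h3) v a h
        omega
      · intro v b h
        have := gg_boundB t k hk lm ht h3 (lm_B _) v b h
        omega
    · intro a b hab
      exact gg_adj t k hk lm ht h3 hA hB (Kbm κ (κ + t + 1)) (fun x y => kbm_lr x y)
        lm_0 (lm_end _ h3) (lm_noll _) (lm_bb _ hB (by omega)) a b hab
end

section
/- Let F_{n,t} = K_t ∨ M_{n-t}, where M_{n-t} is a maximal matching on n-t vertices (⌊(n-t)/2⌋ disjoint edges plus possibly one isolated vertex). Then F_{n,t} contains no subgraph isomorphic to C_{4,...,4}, the graph of t four-cycles intersecting in a single vertex. -/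
/-- `H` occurs as a subgraph of `G`. -/
def ContainsCopy {α β : Type*} (H : SimpleGraph α) (G : SimpleGraph β) : Prop :=
  ∃ f : α ↪ β, ∀ a b, H.Adj a b → G.Adj (f a) (f b)

/-- `F_{n,t} = K_t ∨ M_{n-t}`: the first `t` vertices are adjacent to
everything; on the remaining `n - t` vertices there is a maximal matching,
pairing `t+2i` with `t+2i+1`. -/
def Fnt (n t : ℕ) : SimpleGraph (Fin n) :=
  SimpleGraph.fromRel (fun a b =>
    (a : ℕ) < t ∨ (b : ℕ) < t ∨
      (t ≤ (a : ℕ) ∧ ((a : ℕ) - t) % 2 = 0 ∧ (b : ℕ) = (a : ℕ) + 1))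

/-!
Outside `K_t` the graph `F_{n,t}` is a matching, so it contains no path on three vertices and
every `4`-cycle of `F_{n,t}` has at least two vertices in `K_t`. If the common vertex of the `t`
four-cycles lies outside `K_t`, the cycles need `2t` vertices of `K_t`; if it lies in `K_t`, they
need `t` more. Either way that is more than the `t` vertices `K_t` has.
-/

namespace Fnt

variable {n t : ℕ}

lemma lt_of_adj_of_adj {u v w : Fin n} (hvu : (Fnt n t).Adj v u) (huw : (Fnt n t).Adj u w)
    (hvw : v ≠ w) : (v : ℕ) < t ∨ (u : ℕ) < t ∨ (w : ℕ) < t := by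
  rw [Fnt, SimpleGraph.fromRel_adj] at hvu huw
  by_contra! h
  exact hvw (Fin.ext (by omega))

lemma two_le_clique_count_of_cycle {a b c d : Fin n} (hab : (Fnt n t).Adj a b)
    (hbc : (Fnt n t).Adj b c) (hcd : (Fnt n t).Adj c d) (hda : (Fnt n t).Adj d a)
    (hac : a ≠ c) (hbd : b ≠ d) :
    2 ≤ (if (a : ℕ) < t then 1 else 0) + (if (b : ℕ) < t then 1 else 0) +
      (if (c : ℕ) < t then 1 else 0) + (if (d : ℕ) < t then 1 else 0) := by
  have hdab := lt_of_adj_of_adj hda hab hbd.symm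
  have habc := lt_of_adj_of_adj hab hbc hac
  have hbcd := lt_of_adj_of_adj hbc hcd hbd
  have hcda := lt_of_adj_of_adj hcd hda hac.symm
  split_ifs <;> omega

end Fnt

lemma card_filter_val_lt_le {α : Type*} [Fintype α] {n : ℕ} (f : α ↪ Fin n) (t : ℕ) :
    (Finset.univ.filter fun a => (f a : ℕ) < t).card ≤ t := by
  simpa using Finset.card_le_card_of_injOn (fun a => (f a : ℕ)) (t := Finset.range t)
    (fun a ha => by simpa using ha) (fun a _ b _ h => f.injective (Fin.ext h))

section interCycles

variable {t : ℕ} {k : Fin t → ℕ}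

lemma interCycles_adj_none_some {i : Fin t} {j : Fin (2 * k i - 1)} :
    (interCycles t k).Adj none (some ⟨i, j⟩) ↔ (j : ℕ) = 0 ∨ (j : ℕ) = 2 * k i - 2 := by
  simp [interCycles]

lemma interCycles_adj_some_some {i i' : Fin t} {j : Fin (2 * k i - 1)}
    {j' : Fin (2 * k i' - 1)} :
    (interCycles t k).Adj (some ⟨i, j⟩) (some ⟨i', j'⟩) ↔
      i = i' ∧ (j : ℕ) + 1 = j' ∨ i' = i ∧ (j' : ℕ) + 1 = j := by
  rw [interCycles, SimpleGraph.fromRel_adj]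
  constructor
  · exact fun h => h.2
  · rintro (⟨rfl, h⟩ | ⟨rfl, h⟩) <;> refine ⟨fun he => ?_, by simp [h]⟩ <;>
      · simp only [Option.some.injEq, Sigma.mk.injEq, heq_eq_eq] at he
        omega

end interCycles

/-- `F_{n,t}` contains no copy of `C_{4,…,4}`, the graph of
`t` four-cycles intersecting in a single vertex. -/
theorem stmt14 (n t : ℕ) (ht : 1 ≤ t) :
    ¬ ContainsCopy (interCycles t (fun _ => 2)) (Fnt n t) := by
  rintro ⟨f, hf⟩
  set inClique : Option (Σ _ : Fin t, Fin 3) → ℕ := fun v => if (f v : ℕ) < t then 1 else 0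
  have hupper : ∑ v, inClique v ≤ t := by
    simpa [inClique, Finset.sum_boole] using card_filter_val_lt_le f t
  have hcycle (i : Fin t) : 2 ≤ inClique none + ∑ j : Fin 3, inClique (some ⟨i, j⟩) := by
    have hinj {v w} (h : v ≠ w) : f v ≠ f w := f.injective.ne h
    rw [Fin.sum_univ_three, ← add_assoc, ← add_assoc]
    refine Fnt.two_le_clique_count_of_cycle (hf _ _ ?_) (hf _ _ ?_) (hf _ _ ?_) (hf _ _ ?_)
      (hinj (by simp)) (hinj (by simp))
    · exact interCycles_adj_none_some.2 (Or.inl rfl)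
    · exact interCycles_adj_some_some.2 (Or.inl ⟨rfl, rfl⟩)
    · exact interCycles_adj_some_some.2 (Or.inl ⟨rfl, rfl⟩)
    · exact (interCycles_adj_none_some.2 (Or.inr rfl)).symm
  have hlower : 2 * t ≤ t * inClique none + ∑ i, ∑ j : Fin 3, inClique (some ⟨i, j⟩) := by
    simpa [Finset.sum_add_distrib, mul_comm] using
      Finset.sum_le_sum (s := Finset.univ) fun i _ => hcycle i
  rw [Fintype.sum_option, Fintype.sum_sigma] at hupper
  have hhub : inClique none ≤ 1 := by simp only [inClique]; split_ifs <;> simp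
  interval_cases inClique none <;> omega
end
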